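/- arXiv:2109.05162 — 3 statements merged into one kernel-verified Lean document; each statement's English description precedes it below -/
import Mathlib

section
/- Let x : [0, t_f) → ℝⁿ be differentiable and satisfy x'(t) = −(k μ(t) + h τ'(t)/τ(t)) x(t), where τ(t) = 1 + ln(t_f/(t_f−t)), μ(t) = τ(t)^h, k > 0, h > 0, t_f > 0. Then ‖x(t)‖ → 0 as t → t_f⁻. -/
open Set Filter Topology Real

theorem prescribed_time_convergence (t_f k h : ℝ) (ht : 0 < t_f)
    (hk : 0 < k) (hh : 0 < h) (n : ℕ)
    (τ μ : ℝ → ℝ)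
    (hτ : ∀ t, τ t = 1 + Real.log (t_f / (t_f - t)))
    (hμ : ∀ t, μ t = τ t ^ h)
    (x : ℝ → EuclideanSpace ℝ (Fin n))
    (hx : ∀ t ∈ Ico (0:ℝ) t_f,
      HasDerivAt x (-(k * μ t + h * (1 / (t_f - t)) / τ t) • x t) t) :
    Tendsto (fun t => ‖x t‖) (𝓝[<] t_f) (𝓝 0) := by
  -- basic positivity facts
  have hτ1 : ∀ s ∈ Ico (0:ℝ) t_f, 1 ≤ τ s := by
    intro s hs
    rw [hτ s]
    have hpos : 0 < t_f - s := by linarith [hs.2]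
    have : (1:ℝ) ≤ t_f / (t_f - s) := by
      rw [le_div_iff₀ hpos]; linarith [hs.1]
    linarith [Real.log_nonneg this]
  have hμ1 : ∀ s ∈ Ico (0:ℝ) t_f, 1 ≤ μ s := fun s hs => by
    rw [hμ s]; exact Real.one_le_rpow (hτ1 s hs) hh.le
  -- derivative of τ
  have hτ' : ∀ s ∈ Ico (0:ℝ) t_f, HasDerivAt τ (1 / (t_f - s)) s := by
    intro s hs
    have hpos : 0 < t_f - s := by linarith [hs.2]
    have hd : HasDerivAt (fun u => 1 + (Real.log t_f - Real.log (t_f - u)))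
        (1 / (t_f - s)) s := by
      have h1 : HasDerivAt (fun u : ℝ => t_f - u) (-1) s :=
        (hasDerivAt_id s).const_sub t_f |>.congr_deriv rfl
      have h2 : HasDerivAt (fun u => Real.log (t_f - u)) (-1 / (t_f - s)) s :=
        h1.log hpos.ne'
      have := (hasDerivAt_const s (Real.log t_f)).sub h2
      have h3 := (hasDerivAt_const s (1:ℝ)).add this
      convert h3 using 1
      · rfl
      · rfl
      · rfl
      ring
    refine hd.congr_of_eventuallyEq ?_
    have hmem : Iio t_f ∈ 𝓝 s := Iio_mem_nhds hs.2
    filter_upwards [hmem] with u hu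
    rw [hτ u, Real.log_div ht.ne' (by simp at hu; linarith : t_f - u ≠ 0)]
  -- derivative of μ
  have hμ' : ∀ s ∈ Ico (0:ℝ) t_f,
      HasDerivAt μ (μ s * (h * (1 / (t_f - s)) / τ s)) s := by
    intro s hs
    have hτpos : 0 < τ s := by linarith [hτ1 s hs]
    have hrpow : HasDerivAt (fun y : ℝ => y ^ h) (h * τ s ^ (h - 1)) (τ s) :=
      Real.hasDerivAt_rpow_const (Or.inl hτpos.ne')
    have hcomp := hrpow.comp s (hτ' s hs)
    have hμd : HasDerivAt μ (h * τ s ^ (h - 1) * (1 / (t_f - s))) s :=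
      hcomp.congr_of_eventuallyEq (Eventually.of_forall fun u => by
        simp [hμ u, Function.comp])
    convert hμd using 1
    rw [hμ s, Real.rpow_sub_one hτpos.ne']
    field_simp
  -- the auxiliary function w = μ • x satisfies w' = -(k μ) • w
  set w : ℝ → EuclideanSpace ℝ (Fin n) := fun s => μ s • x s with hw_def
  have hw' : ∀ s ∈ Ico (0:ℝ) t_f, HasDerivAt w (-(k * μ s) • w s) s := by
    intro s hs
    have := (hμ' s hs).smul (hx s hs)
    convert this using 1
    · rfl
    · rfl
    · rfl
    · rfl
    simp only [hw_def, smul_smul]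
    rw [← add_smul]
    congr 1
    ring
  -- f = ‖w‖² has nonpositive derivative
  set f : ℝ → ℝ := fun s => inner ℝ (w s) (w s) with hf_def
  have hf' : ∀ s ∈ Ico (0:ℝ) t_f,
      HasDerivAt f (-(2 * (k * μ s)) * inner ℝ (w s) (w s)) s := by
    intro s hs
    have := (hw' s hs).inner ℝ (hw' s hs)
    convert this using 1
    · rfl
    · rfl
    simp only [real_inner_smul_left, real_inner_smul_right]
    ring
  -- f is antitone on [0, t], hence ‖w t‖ ≤ ‖x 0‖
  have hμ0 : μ 0 = 1 := by
    rw [hμ 0, hτ 0]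
    simp [Real.log_div ht.ne' ht.ne']
  have hbound : ∀ t ∈ Ico (0:ℝ) t_f, μ t * ‖x t‖ ≤ ‖x 0‖ := by
    intro t htm
    have hsub : Icc (0:ℝ) t ⊆ Ico 0 t_f := fun s hs =>
      ⟨hs.1, lt_of_le_of_lt hs.2 htm.2⟩
    have hanti : AntitoneOn f (Icc 0 t) := by
      apply antitoneOn_of_deriv_nonpos (convex_Icc 0 t)
      · intro s hs
        exact ((hf' s (hsub hs)).continuousAt).continuousWithinAt
      · intro s hs
        rw [interior_Icc] at hs
        exact (hf' s (hsub (Ioo_subset_Icc_self hs))).differentiableAt.differentiableWithinAt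
      · intro s hs
        rw [interior_Icc] at hs
        have hs' := hsub (Ioo_subset_Icc_self hs)
        rw [(hf' s hs').deriv]
        have h1 : (0:ℝ) ≤ inner ℝ (w s) (w s) := real_inner_self_nonneg
        have h2 : (0:ℝ) < k * μ s := mul_pos hk (by linarith [hμ1 s hs'])
        nlinarith
    have hft : f t ≤ f 0 := hanti (left_mem_Icc.mpr htm.1) (right_mem_Icc.mpr htm.1) htm.1
    have hfw : f t = ‖w t‖ ^ 2 := real_inner_self_eq_norm_sq (w t)
    have hfw0 : f 0 = ‖x 0‖ ^ 2 := by
      rw [hf_def]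
      simp only [hw_def, hμ0, one_smul]
      exact real_inner_self_eq_norm_sq (x 0)
    have hwt : ‖w t‖ ≤ ‖x 0‖ := by
      nlinarith [norm_nonneg (w t), norm_nonneg (x 0), hfw ▸ hfw0 ▸ hft]
    have : ‖w t‖ = μ t * ‖x t‖ := by
      rw [hw_def]
      simp only [norm_smul, Real.norm_eq_abs,
        abs_of_nonneg (by linarith [hμ1 t htm] : (0:ℝ) ≤ μ t)]
    linarith [this ▸ hwt]
  -- μ → atTop as t → t_f⁻
  have hμtop : Tendsto μ (𝓝[<] t_f) atTop := by
    have h1 : Tendsto (fun t => t_f - t) (𝓝[<] t_f) (𝓝[>] 0) := by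
      apply tendsto_nhdsWithin_of_tendsto_nhds_of_eventually_within
      · have : Tendsto (fun t => t_f - t) (𝓝 t_f) (𝓝 (t_f - t_f)) :=
          (tendsto_const_nhds.sub tendsto_id)
        simpa using this.mono_left nhdsWithin_le_nhds
      · filter_upwards [self_mem_nhdsWithin] with t ht'
        simp only [mem_Iio] at ht'
        simp [mem_Ioi]; linarith
    have h2 : Tendsto (fun t => t_f / (t_f - t)) (𝓝[<] t_f) atTop := by
      have := h1.inv_tendsto_nhdsGT_zero
      have h3 := this.const_mul_atTop ht
      refine h3.congr fun t => ?_
      simp [div_eq_mul_inv]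
    have h4 : Tendsto τ (𝓝[<] t_f) atTop := by
      have := tendsto_atTop_add_const_left (𝓝[<] t_f) 1
        (Real.tendsto_log_atTop.comp h2)
      refine this.congr fun t => ?_
      rw [hτ t]; rfl
    have h5 := (tendsto_rpow_atTop hh).comp h4
    refine h5.congr fun t => ?_
    rw [hμ t]; rfl
  -- conclude by squeeze
  have hdiv : Tendsto (fun t => ‖x 0‖ / μ t) (𝓝[<] t_f) (𝓝 0) :=
    tendsto_const_nhds.div_atTop hμtop
  apply squeeze_zero' (Eventually.of_forall fun t => norm_nonneg _) _ hdiv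
  have hmem : Ioo 0 t_f ∈ 𝓝[<] t_f := Ioo_mem_nhdsLT_of_mem (by constructor <;> linarith)
  filter_upwards [hmem] with t htm
  have htm' : t ∈ Ico (0:ℝ) t_f := ⟨htm.1.le, htm.2⟩
  have hμpos : 0 < μ t := by linarith [hμ1 t htm']
  rw [le_div_iff₀ hμpos, mul_comm]
  exact hbound t htm'
end

section
/- Consider the scaling function μ(t) = T^{1+m}/(T − t)^{1+m} on [0, T) with T > 0 and m a positive integer. If V : [0, T) → ℝ is nonnegative, differentiable, and V'(t) ≤ −2k μ(t) V(t) + (μ(t)/(4λ)) d(t)² with k, λ > 0 and |d(t)| ≤ σ, then μ(t)² x(t)² remains bounded provided V(t) = μ(t)² x(t)²/2 along a scalar signal x, and in particular |x(t)| ≤ (1/μ(t))·C for some constant C depending on x(0), σ, k, λ; hence x(t) → 0 as t → T⁻. -/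
/-!
Wherever `V` exceeds `σ² / (8 k λ)`, the differential inequality together with `|d| ≤ σ` and
`μ > 0` forces `V' < 0`; a fencing argument therefore keeps `V` below
`M = max (V 0) (σ² / (8 k λ))` on all of `[0, T)`. Since `V = μ² x² / 2`, this gives
`|x| ≤ √(2M) / μ`, and `1 / μ(t) = ((T - t) / T)^(1+m)` tends to `0` as `t → T⁻`.
-/

open Set Filter Topology Real

noncomputable def polyScaling (T : ℝ) (n : ℕ) (t : ℝ) : ℝ := T ^ n / (T - t) ^ n

lemma polyScaling_pos {T t : ℝ} (n : ℕ) (hT : 0 < T) (ht : t < T) : 0 < polyScaling T n t := by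
  have : 0 < T - t := sub_pos.2 ht
  unfold polyScaling
  positivity

lemma tendsto_polyScaling_inv_nhdsLT {T : ℝ} {n : ℕ} (hn : n ≠ 0) :
    Tendsto (fun t => (polyScaling T n t)⁻¹) (𝓝[<] T) (𝓝 0) := by
  have hcont : Continuous fun t => (T - t) ^ n / T ^ n := by fun_prop
  have hlim := (hcont.tendsto T).mono_left (nhdsWithin_le_nhds (s := Iio T))
  simpa [polyScaling, zero_pow hn] using hlim

lemma tendsto_zero_of_abs_le_div {f g : ℝ → ℝ} {l : Filter ℝ} {C : ℝ}
    (hbound : ∀ᶠ t in l, |f t| ≤ C / g t) (hg : Tendsto (fun t => (g t)⁻¹) l (𝓝 0)) :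
    Tendsto f l (𝓝 0) := by
  have hlim : Tendsto (fun t => C / g t) l (𝓝 0) := by
    simpa [div_eq_mul_inv] using hg.const_mul C
  exact squeeze_zero_norm' hbound hlim

lemma le_on_Ico_of_deriv_neg_above {V V' : ℝ → ℝ} {a b M : ℝ}
    (hV' : ∀ t ∈ Ico a b, HasDerivAt V (V' t) t) (ha : V a ≤ M)
    (hneg : ∀ t ∈ Ico a b, M < V t → V' t < 0) : ∀ t ∈ Ico a b, V t ≤ M := by
  intro t ht
  have hsub : Icc a t ⊆ Ico a b := fun s hs => ⟨hs.1, hs.2.trans_lt ht.2⟩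
  refine le_of_forall_pos_le_add fun ε hε => ?_
  -- fence `V` by the constant `M + ε`, which `V` could only reach while exceeding `M`
  refine image_le_of_deriv_right_lt_deriv_boundary (B := fun _ => M + ε) (B' := fun _ => 0)
    (fun s hs => (hV' s (hsub hs)).continuousAt.continuousWithinAt)
    (fun s hs => (hV' s (hsub (Ico_subset_Icc_self hs))).hasDerivWithinAt)
    (by linarith) (fun _ => hasDerivAt_const _ _) ?_ (right_mem_Icc.2 ht.1)
  intro s hs hVs
  exact hneg s (hsub (Ico_subset_Icc_self hs)) (by linarith)

lemma lyapunov_deriv_neg {k lam σ μ d v v' : ℝ} (hk : 0 < k) (hlam : 0 < lam) (hμ : 0 < μ)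
    (hd : |d| ≤ σ) (hineq : v' ≤ -2 * k * μ * v + μ / (4 * lam) * d ^ 2)
    (hv : σ ^ 2 / (8 * k * lam) < v) : v' < 0 := by
  have hd2 : d ^ 2 ≤ σ ^ 2 := sq_le_sq' (abs_le.1 hd).1 (abs_le.1 hd).2
  have hσv : σ ^ 2 / (4 * lam) < 2 * k * v := by
    rw [div_lt_iff₀ (by positivity)] at hv ⊢
    linarith
  calc v' ≤ -2 * k * μ * v + μ / (4 * lam) * σ ^ 2 := by
          have := mul_le_mul_of_nonneg_left hd2 (by positivity : 0 ≤ μ / (4 * lam))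
          linarith
    _ = μ * (σ ^ 2 / (4 * lam) - 2 * k * v) := by ring
    _ < 0 := mul_neg_of_pos_of_neg hμ (by linarith)

lemma abs_le_sqrt_div_of_sq_mul_sq_le {μ x M : ℝ} (hμ : 0 < μ) (h : μ ^ 2 * x ^ 2 / 2 ≤ M) :
    |x| ≤ √(2 * M) / μ := by
  have hμx : |μ * x| ≤ √(2 * M) := by
    rw [← sqrt_sq_eq_abs]
    exact sqrt_le_sqrt (by nlinarith)
  rw [abs_mul, abs_of_pos hμ] at hμx
  rw [le_div_iff₀ hμ]
  linarith

theorem polynomial_scaling_convergence_general (T k lam σ : ℝ) (m : ℕ)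
    (hT : 0 < T) (hk : 0 < k) (hlam : 0 < lam)
    (μ : ℝ → ℝ) (hμ : ∀ t, μ t = T ^ (1 + m) / (T - t) ^ (1 + m))
    (x d V V' : ℝ → ℝ)
    (hV : ∀ t, V t = μ t ^ 2 * x t ^ 2 / 2)
    (hV' : ∀ t ∈ Ico (0:ℝ) T, HasDerivAt V (V' t) t)
    (hineq : ∀ t ∈ Ico (0:ℝ) T,
      V' t ≤ -2 * k * μ t * V t + μ t / (4 * lam) * d t ^ 2)
    (hd : ∀ t ∈ Ico (0:ℝ) T, |d t| ≤ σ) :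
    (∃ C : ℝ, ∀ t ∈ Ico (0:ℝ) T, |x t| ≤ C / μ t) ∧
    Tendsto x (𝓝[<] T) (𝓝 0) := by
  have hμ_eq : μ = polyScaling T (1 + m) := funext hμ
  have hμ_pos : ∀ t ∈ Ico (0:ℝ) T, 0 < μ t := fun t ht => hμ_eq ▸ polyScaling_pos _ hT ht.2
  set M := max (V 0) (σ ^ 2 / (8 * k * lam))
  have hV_le : ∀ t ∈ Ico (0:ℝ) T, V t ≤ M :=
    le_on_Ico_of_deriv_neg_above hV' (le_max_left _ _) fun t ht hMV =>
      lyapunov_deriv_neg hk hlam (hμ_pos t ht) (hd t ht) (hineq t ht)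
        ((le_max_right _ _).trans_lt hMV)
  have hbound : ∀ t ∈ Ico (0:ℝ) T, |x t| ≤ √(2 * M) / μ t := fun t ht =>
    abs_le_sqrt_div_of_sq_mul_sq_le (hμ_pos t ht) (hV t ▸ hV_le t ht)
  have hnear : ∀ᶠ t in 𝓝[<] T, t ∈ Ico (0:ℝ) T := Ico_mem_nhdsLT hT
  refine ⟨⟨_, hbound⟩, tendsto_zero_of_abs_le_div (hnear.mono hbound) ?_⟩
  rw [hμ_eq]
  exact tendsto_polyScaling_inv_nhdsLT (by omega)

theorem polynomial_scaling_convergence (T k lam σ : ℝ) (m : ℕ)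
    (hT : 0 < T) (hm : 0 < m) (hk : 0 < k) (hlam : 0 < lam) (hσ : 0 < σ)
    (μ : ℝ → ℝ) (hμ : ∀ t, μ t = T ^ (1 + m) / (T - t) ^ (1 + m))
    (x d V V' : ℝ → ℝ)
    (hx : ∀ t ∈ Ico (0:ℝ) T, DifferentiableAt ℝ x t)
    (hV : ∀ t, V t = μ t ^ 2 * x t ^ 2 / 2)
    (hV' : ∀ t ∈ Ico (0:ℝ) T, HasDerivAt V (V' t) t)
    (hineq : ∀ t ∈ Ico (0:ℝ) T,
      V' t ≤ -2 * k * μ t * V t + μ t / (4 * lam) * d t ^ 2)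
    (hd : ∀ t ∈ Ico (0:ℝ) T, |d t| ≤ σ) :
    (∃ C : ℝ, ∀ t ∈ Ico (0:ℝ) T, |x t| ≤ C / μ t) ∧
    Tendsto x (𝓝[<] T) (𝓝 0) :=
  polynomial_scaling_convergence_general T k lam σ m hT hk hlam μ hμ x d V V' hV hV' hineq hd
end

section
/- Cascaded prescribed-time stability (two subsystems): Suppose x₂ : [0,t_f) → ℝⁿ satisfies ‖x₂(t)‖ ≤ C₂/μ₂(t) and x₁ : [0,t_f) → ℝᵐ is differentiable with V₁(t) = μ₁(t)²‖x₁(t)‖² satisfying V₁'(t) ≤ −2k₁μ₁(t)V₁(t) + 2μ₁(t)²c‖x₁(t)‖‖x₂(t)‖, where μᵢ(t) = τ(t)^{hᵢ}, τ(t) = 1 + ln(t_f/(t_f−t)), k₁ > 0, c > 0, C₂ ≥ 0, and h₂ > h₁ > 1. Then ‖x₁(t)‖ → 0 as t → t_f⁻. -/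
/-! Since `μ₁ ≤ μ₂` and `‖x₂‖ ≤ C₂ / μ₂`, dropping the damping term leaves
`V₁' ≤ 2 c C₂ μ₁ ‖x₁‖ = 2 c C₂ √V₁`, so `√V₁ = μ₁ ‖x₁‖` grows at most linearly and stays bounded
on the finite interval `[0, t_f)`. As `μ₁ = τ ^ h₁ → ∞` when `t → t_f⁻`, this forces `‖x₁‖ → 0`. -/

open Set Filter Topology Real

lemma one_le_one_add_log_div_sub {T t : ℝ} (ht : 0 ≤ t) (htT : t < T) :
    1 ≤ 1 + log (T / (T - t)) := by
  have hT : 1 ≤ T / (T - t) := by rw [le_div_iff₀ (by linarith)]; linarith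
  linarith [log_nonneg hT]

lemma tendsto_one_add_log_div_sub_nhdsLT {T : ℝ} (hT : 0 < T) :
    Tendsto (fun t => 1 + log (T / (T - t))) (𝓝[<] T) atTop := by
  have hgap : Tendsto (fun t => T - t) (𝓝[<] T) (𝓝[>] 0) := by
    refine tendsto_nhdsWithin_iff.2 ⟨?_, ?_⟩
    · simpa using ((continuous_sub_left T).tendsto T).mono_left nhdsWithin_le_nhds
    · filter_upwards [self_mem_nhdsWithin] with t (ht : t < T) using sub_pos.2 ht
  refine tendsto_atTop_add_const_left _ 1 (tendsto_log_atTop.comp ?_)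
  simp only [div_eq_mul_inv]
  exact (tendsto_inv_nhdsGT_zero.comp hgap).const_mul_atTop hT

-- `√(V + 1)` rather than `√V`, which need not be differentiable where `V` vanishes.
lemma sqrt_le_sqrt_add_one_add_mul_of_hasDerivAt_le {V V' : ℝ → ℝ} {a b K : ℝ}
    (hV : ∀ t ∈ Ico a b, 0 ≤ V t) (hK : 0 ≤ K)
    (hderiv : ∀ t ∈ Ico a b, HasDerivAt V (V' t) t)
    (hle : ∀ t ∈ Ico a b, V' t ≤ 2 * K * √(V t)) :
    ∀ t ∈ Ico a b, √(V t) ≤ √(V a + 1) + K * (t - a) := by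
  set g : ℝ → ℝ := fun t => √(V t + 1) - K * t
  have hg : ∀ t ∈ Ico a b, HasDerivAt g (V' t / (2 * √(V t + 1)) - K) t := fun t ht =>
    ((hderiv t ht).add_const 1).sqrt (by linarith [hV t ht]) |>.sub
      (by simpa using (hasDerivAt_id t).const_mul K)
  have hanti : AntitoneOn g (Ico a b) := by
    refine antitoneOn_of_hasDerivWithinAt_nonpos (f' := fun t => V' t / (2 * √(V t + 1)) - K)
      (convex_Ico a b)
      (fun t ht => (hg t ht).continuousAt.continuousWithinAt) ?_ ?_ <;> rw [interior_Ico]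
    · exact fun t ht => (hg t (Ioo_subset_Ico_self ht)).hasDerivWithinAt
    intro t ht
    have ht' : t ∈ Ico a b := Ioo_subset_Ico_self ht
    have hpos : 0 < √(V t + 1) := sqrt_pos.2 (by linarith [hV t ht'])
    have hsqrt : √(V t) ≤ √(V t + 1) := sqrt_le_sqrt (by linarith)
    rw [sub_nonpos, div_le_iff₀ (by positivity)]
    nlinarith [hle t ht']
  intro t ht
  have hga := hanti ⟨le_rfl, ht.1.trans_lt ht.2⟩ ht ht.1
  have hsqrt : √(V t) ≤ √(V t + 1) := sqrt_le_sqrt (by linarith)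
  simp only [g] at hga
  linarith

lemma sq_mul_mul_le_mul_of_le_div {a b r s C : ℝ} (ha : 0 < a) (hab : a ≤ b) (hr : 0 ≤ r)
    (hC : 0 ≤ C) (hs : s ≤ C / b) : a ^ 2 * r * s ≤ C * (a * r) := by
  calc a ^ 2 * r * s ≤ a ^ 2 * r * (C / b) := by gcongr
    _ = C * (a * r) * (a / b) := by ring
    _ ≤ C * (a * r) * 1 := by gcongr; exact div_le_one_of_le₀ hab (by linarith)
    _ = C * (a * r) := mul_one _

lemma tendsto_zero_of_mul_le_of_tendsto_atTop {α : Type*} {l : Filter α} {f g : α → ℝ} {M : ℝ}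
    (hf : ∀ᶠ t in l, 0 ≤ f t) (hfg : ∀ᶠ t in l, g t * f t ≤ M) (hg : Tendsto g l atTop) :
    Tendsto f l (𝓝 0) := by
  refine squeeze_zero' hf ?_ ((tendsto_const_nhds (x := M)).div_atTop hg)
  filter_upwards [hfg, hg.eventually_gt_atTop 0] with t hfg hpos
  rwa [le_div_iff₀ hpos, mul_comm]

theorem cascaded_prescribed_time_stability_general (t_f k₁ c C₂ h₁ h₂ : ℝ)
    (ht : 0 < t_f) (hk₁ : 0 < k₁) (hc : 0 < c) (hC₂ : 0 ≤ C₂)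
    (hh₁ : 1 < h₁) (hh : h₁ < h₂) (n m : ℕ)
    (τ μ₁ μ₂ : ℝ → ℝ)
    (hτ : ∀ t, τ t = 1 + Real.log (t_f / (t_f - t)))
    (hμ₁ : ∀ t, μ₁ t = τ t ^ h₁) (hμ₂ : ∀ t, μ₂ t = τ t ^ h₂)
    (x₁ : ℝ → EuclideanSpace ℝ (Fin m))
    (x₂ : ℝ → EuclideanSpace ℝ (Fin n))
    (hx₂ : ∀ t ∈ Ico (0:ℝ) t_f, ‖x₂ t‖ ≤ C₂ / μ₂ t)
    (V₁ V₁' : ℝ → ℝ)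
    (hV₁ : ∀ t, V₁ t = μ₁ t ^ 2 * ‖x₁ t‖ ^ 2)
    (hV₁' : ∀ t ∈ Ico (0:ℝ) t_f, HasDerivAt V₁ (V₁' t) t)
    (hineq : ∀ t ∈ Ico (0:ℝ) t_f,
      V₁' t ≤ -2 * k₁ * μ₁ t * V₁ t +
        2 * μ₁ t ^ 2 * c * ‖x₁ t‖ * ‖x₂ t‖) :
    Tendsto (fun t => ‖x₁ t‖) (𝓝[<] t_f) (𝓝 0) := by
  have hτ_ge : ∀ t ∈ Ico 0 t_f, 1 ≤ τ t := fun t ht' =>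
    hτ t ▸ one_le_one_add_log_div_sub ht'.1 ht'.2
  have hμ₁_pos : ∀ t ∈ Ico 0 t_f, 0 < μ₁ t := fun t ht' =>
    hμ₁ t ▸ rpow_pos_of_pos (by linarith [hτ_ge t ht']) h₁
  have hV₁_nonneg : ∀ t, 0 ≤ V₁ t := fun t => hV₁ t ▸ by positivity
  have hsqrt : ∀ t ∈ Ico 0 t_f, √(V₁ t) = μ₁ t * ‖x₁ t‖ := fun t ht' => by
    rw [hV₁, ← mul_pow, sqrt_sq (mul_nonneg (hμ₁_pos t ht').le (norm_nonneg _))]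
  have hV₁'_le : ∀ t ∈ Ico 0 t_f, V₁' t ≤ 2 * (c * C₂) * √(V₁ t) := fun t ht' => by
    have hμ₁₂ : μ₁ t ≤ μ₂ t := hμ₁ t ▸ hμ₂ t ▸ rpow_le_rpow_of_exponent_le (hτ_ge t ht') hh.le
    have hdamping : 0 ≤ k₁ * μ₁ t * V₁ t :=
      mul_nonneg (mul_nonneg hk₁.le (hμ₁_pos t ht').le) (hV₁_nonneg t)
    have hcross := mul_le_mul_of_nonneg_left (sq_mul_mul_le_mul_of_le_div
      (hμ₁_pos t ht') hμ₁₂ (norm_nonneg (x₁ t)) hC₂ (hx₂ t ht')) hc.le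
    rw [hsqrt t ht']
    linarith [hineq t ht']
  have hμ₁_top : Tendsto μ₁ (𝓝[<] t_f) atTop := by
    convert (tendsto_rpow_atTop (y := h₁) (by linarith)).comp
      (tendsto_one_add_log_div_sub_nhdsLT ht) using 1
    exact funext fun t => by rw [hμ₁, hτ]; rfl
  refine tendsto_zero_of_mul_le_of_tendsto_atTop (M := √(V₁ 0 + 1) + c * C₂ * t_f)
    (Eventually.of_forall fun t => norm_nonneg _) ?_ hμ₁_top
  filter_upwards [Ioo_mem_nhdsLT ht] with t ht'
  have htI : t ∈ Ico 0 t_f := Ioo_subset_Ico_self ht'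
  have hgrowth := sqrt_le_sqrt_add_one_add_mul_of_hasDerivAt_le (fun t _ => hV₁_nonneg t)
    (by positivity) hV₁' hV₁'_le t htI
  have hdrift : c * C₂ * t ≤ c * C₂ * t_f := by gcongr; exact ht'.2.le
  rw [← hsqrt t htI]
  linarith

theorem cascaded_prescribed_time_stability (t_f k₁ c C₂ h₁ h₂ : ℝ)
    (ht : 0 < t_f) (hk₁ : 0 < k₁) (hc : 0 < c) (hC₂ : 0 ≤ C₂)
    (hh₁ : 1 < h₁) (hh : h₁ < h₂) (n m : ℕ)
    (τ μ₁ μ₂ : ℝ → ℝ)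
    (hτ : ∀ t, τ t = 1 + Real.log (t_f / (t_f - t)))
    (hμ₁ : ∀ t, μ₁ t = τ t ^ h₁) (hμ₂ : ∀ t, μ₂ t = τ t ^ h₂)
    (x₁ : ℝ → EuclideanSpace ℝ (Fin m))
    (x₂ : ℝ → EuclideanSpace ℝ (Fin n))
    (hx₂ : ∀ t ∈ Ico (0:ℝ) t_f, ‖x₂ t‖ ≤ C₂ / μ₂ t)
    (hx₁ : ∀ t ∈ Ico (0:ℝ) t_f, DifferentiableAt ℝ x₁ t)
    (V₁ V₁' : ℝ → ℝ)
    (hV₁ : ∀ t, V₁ t = μ₁ t ^ 2 * ‖x₁ t‖ ^ 2)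
    (hV₁' : ∀ t ∈ Ico (0:ℝ) t_f, HasDerivAt V₁ (V₁' t) t)
    (hineq : ∀ t ∈ Ico (0:ℝ) t_f,
      V₁' t ≤ -2 * k₁ * μ₁ t * V₁ t +
        2 * μ₁ t ^ 2 * c * ‖x₁ t‖ * ‖x₂ t‖) :
    Tendsto (fun t => ‖x₁ t‖) (𝓝[<] t_f) (𝓝 0) :=
  cascaded_prescribed_time_stability_general t_f k₁ c C₂ h₁ h₂ ht hk₁ hc hC₂ hh₁ hh n m τ μ₁ μ₂ hτ
    hμ₁ hμ₂ x₁ x₂ hx₂ V₁ V₁' hV₁ hV₁' hineq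
end
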